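/- For every z ∈ ℂ with Im z > 0 and all t, u ∈ ℝ with t + u ≥ 0: exp(∫_{−u}^{t} m_sc′(z_{t−r}) dr) = e^{−(t+u)/2}·√(z_{t+u}²−4)/√(z²−4), where m_sc′(w) = (w/√(w²−4) − 1)/2 is the derivative of m_sc. (Note that z_{t−r} lies in the upper half-plane for all r ∈ [−u, t], since t−r ∈ [0, t+u].) -/

import Mathlib

open MeasureTheory Real Filter Set

noncomputable section

/-- `√(z²−4) := √(z−2)·√(z+2)` with principal square roots (branch cut `[−2,2]`). -/
def sqrtD (z : ℂ) : ℂ := (z - 2) ^ ((1 : ℂ) / 2) * (z + 2) ^ ((1 : ℂ) / 2)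

/-- The characteristic curve `z_t`. -/
def charC (z : ℂ) (t : ℝ) : ℂ :=
  ((Real.exp (t / 2) : ℂ) * (z + sqrtD z) + (Real.exp (-t / 2) : ℂ) * (z - sqrtD z)) / 2

/-- The derivative of the semicircle Stieltjes transform. -/
def mscDeriv (w : ℂ) : ℂ := (w / sqrtD w - 1) / 2

/-!
For `s ≥ 0` the curve `z_s` stays in the upper half-plane, and so does
`(e^{s/2}(z + √(z²−4)) − e^{−s/2}(z − √(z²−4)))/2`, whose square is `z_s² − 4`; since `√(z²−4)` is
the square root of `z² − 4` lying in the upper half-plane, this expression is `√(z_s²−4)`.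
Hence `h(s) := e^{−s/2} √(z_s²−4)` is an explicit function of `s` with values in the upper
half-plane, and `m_sc′(z_s) = h′(s)/h(s)`. After substituting `s = t − r`, the integral is
`log h(t+u) − log h(0)` for the principal logarithm, and its exponential is `h(t+u)/h(0)`.
-/

lemma cpow_one_half_re_pos_and_im_pos {v : ℂ} (hv : 0 < v.im) :
    0 < (v ^ (1 / 2 : ℂ)).re ∧ 0 < (v ^ (1 / 2 : ℂ)).im := by
  have hv0 : v ≠ 0 := by rintro rfl; simp at hv
  have harg_pos : 0 < v.arg := (Complex.arg_nonneg_iff.2 hv.le).lt_of_ne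
    fun h ↦ hv.ne' (Complex.arg_eq_zero_iff.1 h.symm).2
  have harg_lt : v.arg < π := Complex.arg_lt_pi_iff.2 (Or.inr hv.ne')
  have him : (Complex.log v * (1 / 2)).im = v.arg / 2 := by
    simp [Complex.log_im, div_eq_mul_inv]
  rw [Complex.cpow_def_of_ne_zero hv0, Complex.exp_re, Complex.exp_im, him]
  have hcos : 0 < cos (v.arg / 2) := cos_pos_of_mem_Ioo ⟨by linarith [pi_pos], by linarith⟩
  have hsin : 0 < sin (v.arg / 2) := sin_pos_of_pos_of_lt_pi (by linarith) (by linarith)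
  exact ⟨by positivity, by positivity⟩

lemma sqrtD_sq (v : ℂ) : sqrtD v ^ 2 = v ^ 2 - 4 := by
  simp only [sqrtD, mul_pow, one_div, Complex.cpow_ofNat_inv_pow]
  ring

lemma sqrtD_im_pos {v : ℂ} (hv : 0 < v.im) : 0 < (sqrtD v).im := by
  obtain ⟨hre₁, him₁⟩ := cpow_one_half_re_pos_and_im_pos (v := v - 2) (by simpa using hv)
  obtain ⟨hre₂, him₂⟩ := cpow_one_half_re_pos_and_im_pos (v := v + 2) (by simpa using hv)
  rw [sqrtD, Complex.mul_im]
  positivity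

lemma sqrtD_eq_of_sq_eq {v w : ℂ} (hv : 0 < v.im) (hw : 0 < w.im) (h : w ^ 2 = v ^ 2 - 4) :
    sqrtD v = w := by
  rcases sq_eq_sq_iff_eq_or_eq_neg.1 ((sqrtD_sq v).trans h.symm) with h' | h'
  · exact h'
  · have := sqrtD_im_pos hv
    rw [h', Complex.neg_im] at this
    linarith

lemma im_mul_add_sqrtD_add_mul_sub_sqrtD_pos {z : ℂ} (hz : 0 < z.im) {p q : ℝ} (hp : 0 < p) (hq : |q| ≤ p) :
    0 < ((p * (z + sqrtD z) + q * (z - sqrtD z)) / 2).im := by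
  have hS := sqrtD_im_pos hz
  obtain ⟨hq₁, hq₂⟩ := abs_le.1 hq
  simp only [Complex.div_ofNat_im, Complex.add_im, Complex.sub_im, Complex.im_ofReal_mul]
  rcases le_total 0 q with hq₀ | hq₀
  · nlinarith [mul_nonneg hq₀ hz.le]
  · nlinarith [mul_nonneg (neg_nonneg.2 hq₀) hS.le]


lemma exp_half_mul_exp_neg_half (s : ℝ) : (exp (s / 2) : ℂ) * exp (-s / 2) = 1 := by
  rw [← Complex.ofReal_mul, ← Real.exp_add, neg_div, add_neg_cancel, Real.exp_zero,
    Complex.ofReal_one]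

lemma abs_exp_neg_half_le {s : ℝ} (hs : 0 ≤ s) : |exp (-s / 2)| ≤ exp (s / 2) :=
  (abs_of_pos (exp_pos _)).trans_le (exp_le_exp.2 (by linarith))

lemma charC_im_pos {z : ℂ} (hz : 0 < z.im) {s : ℝ} (hs : 0 ≤ s) : 0 < (charC z s).im :=
  im_mul_add_sqrtD_add_mul_sub_sqrtD_pos hz (exp_pos _) (abs_exp_neg_half_le hs)

lemma sqrtD_charC {z : ℂ} (hz : 0 < z.im) {s : ℝ} (hs : 0 ≤ s) :
    sqrtD (charC z s) =
      ((exp (s / 2) : ℂ) * (z + sqrtD z) - (exp (-s / 2) : ℂ) * (z - sqrtD z)) / 2 := by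
  apply sqrtD_eq_of_sq_eq (charC_im_pos hz hs)
  · convert im_mul_add_sqrtD_add_mul_sub_sqrtD_pos hz (q := -exp (-s / 2)) (exp_pos _)
      ((abs_neg _).trans_le (abs_exp_neg_half_le hs)) using 3
    push_cast
    ring
  · rw [charC]
    linear_combination (sqrtD z ^ 2 - z ^ 2) * exp_half_mul_exp_neg_half s + sqrtD_sq z

def dampedSqrtD (z : ℂ) (s : ℝ) : ℂ := (z + sqrtD z - (exp (-s) : ℂ) * (z - sqrtD z)) / 2

lemma dampedSqrtD_zero (z : ℂ) : dampedSqrtD z 0 = sqrtD z := by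
  simp only [dampedSqrtD, neg_zero, Real.exp_zero, Complex.ofReal_one]
  ring

lemma exp_neg_eq_exp_neg_half_sq (s : ℝ) : (exp (-s) : ℂ) = (exp (-s / 2) : ℂ) ^ 2 := by
  rw [← Complex.ofReal_pow, ← Real.exp_nat_mul]
  congr 2
  push_cast
  ring

lemma dampedSqrtD_eq {z : ℂ} (hz : 0 < z.im) {s : ℝ} (hs : 0 ≤ s) :
    dampedSqrtD z s = exp (-s / 2) * sqrtD (charC z s) := by
  rw [sqrtD_charC hz hs, dampedSqrtD, exp_neg_eq_exp_neg_half_sq]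
  linear_combination -(z + sqrtD z) / 2 * exp_half_mul_exp_neg_half s

lemma dampedSqrtD_mem_slitPlane {z : ℂ} (hz : 0 < z.im) {s : ℝ} (hs : 0 ≤ s) :
    dampedSqrtD z s ∈ Complex.slitPlane := by
  have him : 0 < (dampedSqrtD z s).im := by
    convert im_mul_add_sqrtD_add_mul_sub_sqrtD_pos hz (p := 1) (q := -exp (-s)) one_pos
      (by rw [abs_neg, abs_of_pos (exp_pos _)]; exact exp_le_one_iff.2 (by linarith)) using 2
    rw [dampedSqrtD]
    push_cast
    ring
  exact Complex.mem_slitPlane_iff.2 (Or.inr him.ne')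

lemma hasDerivAt_dampedSqrtD (z : ℂ) (s : ℝ) :
    HasDerivAt (dampedSqrtD z) (exp (-s) * (z - sqrtD z) / 2) s := by
  have hexp : HasDerivAt (fun r : ℝ ↦ (exp (-r) : ℂ)) (-exp (-s) : ℝ) s :=
    ((hasDerivAt_neg s).exp.congr_deriv (by ring)).ofReal_comp
  refine (((hexp.mul_const (z - sqrtD z)).const_sub (z + sqrtD z)).div_const 2).congr_deriv ?_
  push_cast
  ring

lemma mscDeriv_charC {z : ℂ} (hz : 0 < z.im) {s : ℝ} (hs : 0 ≤ s) :
    mscDeriv (charC z s) = exp (-s) * (z - sqrtD z) / 2 / dampedSqrtD z s := by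
  have hw : sqrtD (charC z s) ≠ 0 := fun h ↦ by
    simpa [h] using sqrtD_im_pos (charC_im_pos hz hs)
  have hsub : charC z s - sqrtD (charC z s) = exp (-s / 2) * (z - sqrtD z) := by
    rw [sqrtD_charC hz hs, charC]
    ring
  rw [dampedSqrtD_eq hz hs, mscDeriv, exp_neg_eq_exp_neg_half_sq, div_sub_one hw, hsub]
  field_simp

theorem exp_integral_deriv_div_eq_div {h h' : ℝ → ℂ} {a b : ℝ}
    (hderiv : ∀ s ∈ uIcc a b, HasDerivAt h (h' s) s) (hcont : ContinuousOn h' (uIcc a b))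
    (hslit : ∀ s ∈ uIcc a b, h s ∈ Complex.slitPlane) :
    Complex.exp (∫ s in a..b, h' s / h s) = h b / h a := by
  have hne (s) (hs : s ∈ uIcc a b) : h s ≠ 0 := Complex.slitPlane_ne_zero (hslit s hs)
  have hint : IntervalIntegrable (fun s ↦ h' s / h s) volume a b :=
    (hcont.div (fun s hs ↦ (hderiv s hs).continuousAt.continuousWithinAt) hne).intervalIntegrable
  rw [intervalIntegral.integral_eq_sub_of_hasDerivAt
      (fun s hs ↦ (hderiv s hs).clog_real (hslit s hs)) hint,
    Complex.exp_sub, Complex.exp_log (hne b right_mem_uIcc), Complex.exp_log (hne a left_mem_uIcc)]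

/-- Exponential of the integral of `m_sc′` along the characteristic curve. -/
theorem exp_integral_msc_deriv (z : ℂ) (hz : 0 < z.im) (t u : ℝ) (htu : 0 ≤ t + u) :
    Complex.exp (∫ r in (-u)..t, mscDeriv (charC z (t - r)))
      = (Real.exp (-(t + u) / 2) : ℂ) * sqrtD (charC z (t + u)) / sqrtD z := by
  have hIcc : uIcc 0 (t + u) = Icc 0 (t + u) := uIcc_of_le htu
  calc Complex.exp (∫ r in (-u)..t, mscDeriv (charC z (t - r)))
      = Complex.exp (∫ s in 0..t + u, exp (-s) * (z - sqrtD z) / 2 / dampedSqrtD z s) := by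
        rw [intervalIntegral.integral_comp_sub_left (fun s ↦ mscDeriv (charC z s)), sub_self,
          sub_neg_eq_add, intervalIntegral.integral_congr
            fun s hs ↦ mscDeriv_charC hz (hIcc ▸ hs).1]
    _ = dampedSqrtD z (t + u) / dampedSqrtD z 0 :=
        exp_integral_deriv_div_eq_div (fun s _ ↦ hasDerivAt_dampedSqrtD z s)
          (Continuous.continuousOn (by fun_prop))
          fun s hs ↦ dampedSqrtD_mem_slitPlane hz (hIcc ▸ hs).1
    _ = _ := by rw [dampedSqrtD_zero, dampedSqrtD_eq hz htu]

end
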